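/- (Gain estimate, third inequality) Let J ∈ ℝ^{m×n}, L ∈ ℝ^{p×n}, x, x* ∈ ℝⁿ, F, y^δ ∈ ℝ^m, θ > 1, q ∈ (0,1), ζ > 0. Suppose λ satisfies 0 < λ ≤ (q/(1−q))·ζ², that d ∈ ℝⁿ satisfies (JᵀJ + λ LᵀL) d = −Jᵀ(F − y^δ), that ‖F − y^δ + J d‖ = q‖F − y^δ‖, and that ‖F − y^δ + J(x* − x)‖ ≤ (q/θ)‖F − y^δ‖. Set x⁺ := x + d. Then ‖x − x*‖_L² − ‖x⁺ − x*‖_L² ≥ (2(θ−1)(1−q)q/(ζ²θ))·‖F − y^δ‖². -/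

import Mathlib

/-! With the new residual `s = F - yδ + J d`, the normal equation reads `Jᵀ s = -λ LᵀL d`, so
`⟪s, J v⟫ = -λ ⟪L d, L v⟫` for every `v`. Taking `v = x⁺ - x*` turns the gain
`‖x - x*‖_L² - ‖x⁺ - x*‖_L²`, multiplied by `λ`, into `2‖s‖² - 2⟪s, t⟫ + λ‖L d‖²` with
`t = F - yδ + J (x* - x)`. Cauchy–Schwarz and the two residual conditions bound this from below
by `2q²(1 - 1/θ)‖F - yδ‖²`, and dividing by `λ ≤ (q/(1-q))ζ²` gives the estimate. -/

open Matrix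

noncomputable def euclNorm {k : ℕ} (v : Fin k → ℝ) : ℝ :=
  ‖(EuclideanSpace.equiv (Fin k) ℝ).symm v‖

section EuclideanNorm

variable {k : ℕ}

theorem inner_euclideanSpace_equiv_symm (u v : Fin k → ℝ) :
    inner ℝ ((EuclideanSpace.equiv (Fin k) ℝ).symm u) ((EuclideanSpace.equiv (Fin k) ℝ).symm v) =
      u ⬝ᵥ v :=
  (EuclideanSpace.inner_toLp_toLp u v).trans (by simp [dotProduct_comm])

theorem euclNorm_nonneg (v : Fin k → ℝ) : 0 ≤ euclNorm v := norm_nonneg _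

theorem euclNorm_sq (v : Fin k → ℝ) : euclNorm v ^ 2 = v ⬝ᵥ v := by
  rw [euclNorm, ← real_inner_self_eq_norm_sq, inner_euclideanSpace_equiv_symm]

theorem dotProduct_le_euclNorm_mul (u v : Fin k → ℝ) : u ⬝ᵥ v ≤ euclNorm u * euclNorm v := by
  rw [← inner_euclideanSpace_equiv_symm]
  exact real_inner_le_norm _ _

end EuclideanNorm

section NormalEquation

variable {R : Type*} [CommRing R] {l m n : Type*} [Fintype l] [Fintype m] [Fintype n]
  {J : Matrix m n R} {L : Matrix l n R} {lam : R} {r : m → R} {d : n → R}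

theorem transpose_mulVec_residual_of_normal_equation
    (hd : (Jᵀ * J + lam • (Lᵀ * L)) *ᵥ d = -(Jᵀ *ᵥ r)) :
    Jᵀ *ᵥ (r + J *ᵥ d) = -(lam • (Lᵀ *ᵥ (L *ᵥ d))) := by
  rw [add_mulVec, smul_mulVec, ← mulVec_mulVec, ← mulVec_mulVec] at hd
  rw [mulVec_add]
  linear_combination hd

theorem residual_dotProduct_mulVec_of_normal_equation
    (hd : (Jᵀ * J + lam • (Lᵀ * L)) *ᵥ d = -(Jᵀ *ᵥ r)) (v : n → R) :
    (r + J *ᵥ d) ⬝ᵥ J *ᵥ v = -(lam * (L *ᵥ d ⬝ᵥ L *ᵥ v)) := by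
  rw [dotProduct_mulVec, ← mulVec_transpose, transpose_mulVec_residual_of_normal_equation hd,
    neg_dotProduct, smul_dotProduct, mulVec_transpose, ← dotProduct_mulVec, smul_eq_mul]

theorem gain_identity_of_normal_equation
    (hd : (Jᵀ * J + lam • (Lᵀ * L)) *ᵥ d = -(Jᵀ *ᵥ r)) (x xstar : n → R) :
    lam * (L *ᵥ (x - xstar) ⬝ᵥ L *ᵥ (x - xstar) - L *ᵥ (x + d - xstar) ⬝ᵥ L *ᵥ (x + d - xstar)) =
      2 * ((r + J *ᵥ d) ⬝ᵥ (r + J *ᵥ d)) - 2 * ((r + J *ᵥ d) ⬝ᵥ (r + J *ᵥ (xstar - x)))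
        + lam * (L *ᵥ d ⬝ᵥ L *ᵥ d) := by
  have h := residual_dotProduct_mulVec_of_normal_equation hd (x + d - xstar)
  have hJ : J *ᵥ (x + d - xstar) = (r + J *ᵥ d) - (r + J *ᵥ (xstar - x)) := by
    simp only [mulVec_add, mulVec_sub]; abel
  have hL : L *ᵥ (x + d - xstar) = L *ᵥ (x - xstar) + L *ᵥ d := by
    rw [add_sub_right_comm, mulVec_add]
  rw [hJ, hL] at h
  rw [hL]
  simp only [dotProduct_sub, dotProduct_add, add_dotProduct, dotProduct_comm (L *ᵥ d)] at h ⊢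
  linear_combination (-2) * h

end NormalEquation

theorem two_mul_sq_sub_le_lam_mul_gain {m n p : ℕ} {J : Matrix (Fin m) (Fin n) ℝ}
    {L : Matrix (Fin p) (Fin n) ℝ} {lam : ℝ} {r : Fin m → ℝ} {d : Fin n → ℝ}
    (hd : (Jᵀ * J + lam • (Lᵀ * L)) *ᵥ d = -(Jᵀ *ᵥ r)) (hlam : 0 ≤ lam) (x xstar : Fin n → ℝ) :
    2 * euclNorm (r + J *ᵥ d) ^ 2
        - 2 * euclNorm (r + J *ᵥ d) * euclNorm (r + J *ᵥ (xstar - x)) ≤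
      lam * (euclNorm (L *ᵥ (x - xstar)) ^ 2 - euclNorm (L *ᵥ (x + d - xstar)) ^ 2) := by
  have hcs := dotProduct_le_euclNorm_mul (r + J *ᵥ d) (r + J *ᵥ (xstar - x))
  have hstep : 0 ≤ lam * (L *ᵥ d ⬝ᵥ L *ᵥ d) := by
    rw [← euclNorm_sq]; positivity
  rw [euclNorm_sq, euclNorm_sq, euclNorm_sq, gain_identity_of_normal_equation hd]
  linarith

theorem gain_estimate_third_general (m n p : ℕ)
    (J : Matrix (Fin m) (Fin n) ℝ) (L : Matrix (Fin p) (Fin n) ℝ)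
    (x xstar : Fin n → ℝ) (F yδ : Fin m → ℝ)
    (θ q ζ : ℝ) (hθ : 1 < θ)
    (lam : ℝ) (hlam0 : 0 < lam) (hlam1 : lam ≤ (q / (1 - q)) * ζ ^ 2)
    (d : Fin n → ℝ)
    (hd : (Jᵀ * J + lam • (Lᵀ * L)).mulVec d = -(Jᵀ.mulVec (F - yδ)))
    (hqc : euclNorm (F - yδ + J.mulVec d) = q * euclNorm (F - yδ))
    (hnear : euclNorm (F - yδ + J.mulVec (xstar - x)) ≤ (q / θ) * euclNorm (F - yδ)) :
    euclNorm (L.mulVec (x - xstar)) ^ 2 - euclNorm (L.mulVec (x + d - xstar)) ^ 2 ≥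
      (2 * (θ - 1) * (1 - q) * q / (ζ ^ 2 * θ)) * euclNorm (F - yδ) ^ 2 := by
  have hgain := two_mul_sq_sub_le_lam_mul_gain hd hlam0.le x xstar
  set N := euclNorm (F - yδ)
  set gain := euclNorm (L *ᵥ (x - xstar)) ^ 2 - euclNorm (L *ᵥ (x + d - xstar)) ^ 2
  have hqN : 0 ≤ q * N := hqc ▸ euclNorm_nonneg _
  have hlow : 2 * q ^ 2 * (θ - 1) / θ * N ^ 2 ≤ lam * gain :=
    calc 2 * q ^ 2 * (θ - 1) / θ * N ^ 2 = 2 * (q * N) ^ 2 - 2 * (q * N) * (q / θ * N) := by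
          field_simp
      _ ≤ 2 * (q * N) ^ 2 - 2 * (q * N) * euclNorm (F - yδ + J *ᵥ (xstar - x)) := by gcongr
      _ ≤ lam * gain := hqc ▸ hgain
  show _ ≤ gain
  calc 2 * (θ - 1) * (1 - q) * q / (ζ ^ 2 * θ) * N ^ 2
        = 2 * q ^ 2 * (θ - 1) / θ * N ^ 2 / (q / (1 - q) * ζ ^ 2) := by
          field_simp
    _ ≤ 2 * q ^ 2 * (θ - 1) / θ * N ^ 2 / lam := by gcongr
    _ ≤ gain := (div_le_iff₀ hlam0).2 (by linarith)

/-- Gain estimate, third inequality: if additionally `0 < λ ≤ (q/(1−q))ζ²`, then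
`‖x − x*‖_L² − ‖x⁺ − x*‖_L² ≥ (2(θ−1)(1−q)q/(ζ²θ))‖F − yδ‖²`. -/
theorem gain_estimate_third (m n p : ℕ)
    (J : Matrix (Fin m) (Fin n) ℝ) (L : Matrix (Fin p) (Fin n) ℝ)
    (x xstar : Fin n → ℝ) (F yδ : Fin m → ℝ)
    (θ q ζ : ℝ) (hθ : 1 < θ) (hq0 : 0 < q) (hq1 : q < 1) (hζ : 0 < ζ)
    (lam : ℝ) (hlam0 : 0 < lam) (hlam1 : lam ≤ (q / (1 - q)) * ζ ^ 2)
    (d : Fin n → ℝ)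
    (hd : (Jᵀ * J + lam • (Lᵀ * L)).mulVec d = -(Jᵀ.mulVec (F - yδ)))
    (hqc : euclNorm (F - yδ + J.mulVec d) = q * euclNorm (F - yδ))
    (hnear : euclNorm (F - yδ + J.mulVec (xstar - x)) ≤ (q / θ) * euclNorm (F - yδ)) :
    euclNorm (L.mulVec (x - xstar)) ^ 2 - euclNorm (L.mulVec (x + d - xstar)) ^ 2 ≥
      (2 * (θ - 1) * (1 - q) * q / (ζ ^ 2 * θ)) * euclNorm (F - yδ) ^ 2 :=
  gain_estimate_third_general m n p J L x xstar F yδ θ q ζ hθ lam hlam0 hlam1 d hd hqc hnear
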